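/- Let x, y be real numbers with 0 < x and 0 ≤ y < 1 and 4x < (1−y)². Then ∑_{k,k'≥0} ((2k+k'+1)!/((k+1)! k! k'!)) x^k y^{k'} = (1/(2x)) · ((1−y)/√((1−y)² − 4x) − 1). -/

import Mathlib

/-!
The coefficient splits as `(2k+1 choose k) * (2k+1+k' choose k')`, so summing over `k'` first with
the negative binomial series gives `(2k+1 choose k) xᵏ / (1-y)^(2k+2)`. Since
`centralBinom (k+1) = 2 (2k+1 choose k)`, with `u = x / (1-y)²` what remains is
`(1/(2x)) ∑_{n ≥ 1} centralBinom n uⁿ`, and `∑ centralBinom n uⁿ = (1 - 4u)^(-1/2)` is the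
binomial series with exponent `-1/2`, because `centralBinom n / 4ⁿ = (1/2)(3/2)⋯(n-1/2) / n!`.
-/

open Nat

theorem Nat.centralBinom_succ_eq_two_mul_choose (n : ℕ) :
    centralBinom (n + 1) = 2 * (n + 1 + n).choose n := by
  rw [centralBinom_eq_two_mul_choose, two_mul, ← add_assoc, choose_succ_succ' (n + 1 + n) n,
    choose_symm_add, ← two_mul]

theorem Nat.cast_factorial_add_add_div (a b c : ℕ) :
    ((a + b + c)! : ℝ) / (a ! * b ! * c !) = (a + b).choose b * (c + (a + b)).choose (a + b) := by
  have hab : ((a + b).choose b : ℝ) * a ! * b ! = (a + b)! := by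
    exact_mod_cast add_choose_mul_factorial_mul_factorial a b
  have habc : ((c + (a + b)).choose (a + b) : ℝ) * c ! * (a + b)! = (a + b + c)! := by
    rw [add_comm (a + b) c]
    exact_mod_cast add_choose_mul_factorial_mul_factorial c (a + b)
  rw [div_eq_iff (by positivity), ← habc, ← hab]
  ring

theorem hasSum_prod_of_nonneg {α β : Type*} {f : α × β → ℝ} (hf : 0 ≤ f) {g : α → ℝ} {s : ℝ}
    (hrow : ∀ a, HasSum (fun b ↦ f (a, b)) (g a)) (hg : HasSum g s) : HasSum f s := by
  have hsum : Summable f := (summable_prod_of_nonneg hf).2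
    ⟨fun a ↦ (hrow a).summable, hg.summable.congr fun a ↦ (hrow a).tsum_eq.symm⟩
  exact (hsum.hasSum.prod_fiberwise hrow).unique hg ▸ hsum.hasSum

theorem ascPochhammer_eval_half_mul_four_pow (n : ℕ) :
    (ascPochhammer ℝ n).eval (1 / 2) * 4 ^ n = n ! * centralBinom n := by
  induction n with
  | zero => simp
  | succ n ih =>
    have h : ((n + 1 : ℕ) : ℝ) * centralBinom (n + 1) = 2 * (2 * n + 1) * centralBinom n := by
      exact_mod_cast succ_mul_centralBinom_succ n
    rw [ascPochhammer_succ_eval, factorial_succ, pow_succ]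
    push_cast at h ⊢
    linear_combination (4 * n + 2) * ih - (n ! : ℝ) * h

theorem multichoose_one_half (n : ℕ) :
    Ring.multichoose (1 / 2 : ℝ) n = centralBinom n / 4 ^ n := by
  have h := Ring.factorial_nsmul_multichoose_eq_ascPochhammer (1 / 2 : ℝ) n
  rw [Polynomial.ascPochhammer_smeval_cast, Polynomial.ascPochhammer_smeval_eq_eval,
    nsmul_eq_mul] at h
  rw [eq_div_iff (by positivity)]
  apply mul_left_cancel₀ (by positivity : (n ! : ℝ) ≠ 0)
  linear_combination 4 ^ n * h + ascPochhammer_eval_half_mul_four_pow n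

theorem hasSum_centralBinom_mul_pow {u : ℝ} (hu : |u| < 1 / 4) :
    HasSum (fun n ↦ centralBinom n * u ^ n) (1 / √(1 - 4 * u)) := by
  have h4u : 4 * u ∈ Metric.eball (0 : ℝ) 1 := by
    rw [mem_eball_zero_iff, ← ofReal_norm, ← ENNReal.ofReal_one,
      ENNReal.ofReal_lt_ofReal_iff one_pos, norm_mul, Real.norm_eq_abs, Real.norm_eq_abs]
    norm_num
    linarith
  have h := (Real.one_div_one_sub_rpow_hasFPowerSeriesOnBall_zero (1 / 2)).hasSum h4u
  simp only [FormalMultilinearSeries.ofScalars_apply_eq, zero_add, ← Ring.multichoose_eq,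
    multichoose_one_half, smul_eq_mul, mul_pow] at h
  have hterm : (fun n : ℕ ↦ (centralBinom n : ℝ) / 4 ^ n * (4 ^ n * u ^ n)) =
      fun n ↦ centralBinom n * u ^ n := funext fun n ↦ by field_simp
  rwa [hterm, ← Real.sqrt_eq_rpow] at h

theorem hasSum_centralBinom_succ_mul_pow {u : ℝ} (hu : |u| < 1 / 4) :
    HasSum (fun n ↦ centralBinom (n + 1) * u ^ (n + 1)) (1 / √(1 - 4 * u) - 1) := by
  simpa using (hasSum_nat_add_iff' 1).mpr (hasSum_centralBinom_mul_pow hu)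

theorem hasSum_multinomial_row {x y : ℝ} (hx : x ≠ 0) (hy : |y| < 1) (k : ℕ) :
    HasSum (fun j : ℕ ↦ ((2 * k + j + 1)! : ℝ) / ((k + 1)! * k ! * j !) * x ^ k * y ^ j)
      (centralBinom (k + 1) * (x / (1 - y) ^ 2) ^ (k + 1) / (2 * x)) := by
  have hy' : 1 - y ≠ 0 := by grind [abs_lt]
  have h := (hasSum_choose_mul_geometric_of_norm_lt_one (k + 1 + k) (r := y)
    (by rwa [Real.norm_eq_abs])).mul_left ((k + 1 + k).choose k * x ^ k)
  have hterm : (fun j : ℕ ↦ ((2 * k + j + 1)! : ℝ) / ((k + 1)! * k ! * j !) * x ^ k * y ^ j) =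
      fun j ↦ (k + 1 + k).choose k * x ^ k * ((j + (k + 1 + k)).choose (k + 1 + k) * y ^ j) := by
    funext j
    rw [show 2 * k + j + 1 = k + 1 + k + j by ring, cast_factorial_add_add_div]
    ring
  have hvalue : (centralBinom (k + 1) : ℝ) * (x / (1 - y) ^ 2) ^ (k + 1) / (2 * x) =
      (k + 1 + k).choose k * x ^ k * (1 / (1 - y) ^ (k + 1 + k + 1)) := by
    rw [centralBinom_succ_eq_two_mul_choose, div_pow, ← pow_mul,
      show k + 1 + k + 1 = 2 * (k + 1) by ring]
    push_cast
    field_simp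
    ring
  rwa [hterm, hvalue]

/-- For x > 0, 0 ≤ y < 1 and 4x < (1−y)²:
∑_{k,k'} (2k+k'+1)!/((k+1)!k!k'!) xᵏ y^{k'} = (1/(2x))·((1−y)/√((1−y)²−4x) − 1). -/
theorem stmt_13 (x y : ℝ) (hx : 0 < x) (hy0 : 0 ≤ y) (hy1 : y < 1)
    (hxy : 4 * x < (1 - y) ^ 2) :
    ∑' p : ℕ × ℕ,
      ((2 * p.1 + p.2 + 1).factorial : ℝ) /
        (((p.1 + 1).factorial : ℝ) * p.1.factorial * p.2.factorial) * x ^ p.1 * y ^ p.2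
      = (1 / (2 * x)) * ((1 - y) / Real.sqrt ((1 - y) ^ 2 - 4 * x) - 1) := by
  have hd : 0 < 1 - y := by linarith
  set u := x / (1 - y) ^ 2 with hu
  have hu4 : |u| < 1 / 4 := by
    rw [abs_of_pos (by positivity), hu, div_lt_iff₀ (by positivity)]
    linarith
  have hsqrt : 1 / √(1 - 4 * u) = (1 - y) / √((1 - y) ^ 2 - 4 * x) := by
    rw [show 1 - 4 * u = ((1 - y) ^ 2 - 4 * x) / (1 - y) ^ 2 by rw [hu]; field_simp,
      Real.sqrt_div' _ (by positivity), Real.sqrt_sq hd.le, one_div_div]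
  have hrows := hasSum_multinomial_row hx.ne' (abs_lt.2 ⟨by linarith, hy1⟩)
  refine (hasSum_prod_of_nonneg (fun p ↦ ?_) hrows
    ((hasSum_centralBinom_succ_mul_pow hu4).div_const (2 * x))).tsum_eq.trans ?_
  · positivity
  · rw [hsqrt]
    ring
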